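/- arXiv:1205.5174 — 3 statements merged into one kernel-verified Lean document; each statement's English description precedes it below -/
import Mathlib

section
/- Let r be a positive integer and λ a real number. Then ∫_ℝ z²·(1 + (λ/(2r))·z²)^r · (2π)^{−1/2}·exp(−z²/2) dz = Σ_{j=0}^{r} (r choose j)·(λ/(2r))^j · (2(j+1))!/(2^{j+1}·(j+1)!). Consequently the variance μ₂ of the standardized short-tailed symmetric distribution equals the ratio of this sum to Σ_{j=0}^{r} (r choose j)·(λ/(2r))^j·(2j)!/(2^j j!). -/
/-!
Expanding `(1 + a z²)^r` binomially turns the integral into a finite combination of even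
moments of the standard normal density, `∫ z^(2m) φ(z) dz = (2m - 1)‼ = (2m)! / (2^m m!)`,
which come from `∫ x^(2m) e^(-b x²) dx = Γ(m + 1/2) / b^(m + 1/2)`. The normalizing constant
is a scalar factor, so the variance is the quotient of the two sums.
-/

open MeasureTheory Finset
open Real
open scoped Nat

theorem Nat.factorial_two_mul_eq_doubleFactorial_mul (m : ℕ) :
    (2 * m)! = (2 * m - 1)‼ * (2 ^ m * m !) := by
  cases m with
  | zero => rfl
  | succ k =>
    rw [← Nat.doubleFactorial_two_mul, show 2 * (k + 1) = 2 * k + 1 + 1 by ring,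
      Nat.factorial_eq_mul_doubleFactorial, Nat.add_sub_cancel, mul_comm]

theorem Nat.cast_doubleFactorial_two_mul_sub_one {K : Type*} [Field K] [CharZero K] (m : ℕ) :
    ((2 * m - 1)‼ : K) = (2 * m)! / (2 ^ m * m !) := by
  rw [Nat.factorial_two_mul_eq_doubleFactorial_mul]
  push_cast
  rw [mul_div_cancel_right₀]
  exact mul_ne_zero (pow_ne_zero _ two_ne_zero) (Nat.cast_ne_zero.mpr m.factorial_ne_zero)

theorem integral_pow_two_mul_mul_exp_neg_mul_sq {b : ℝ} (hb : 0 < b) (m : ℕ) :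
    ∫ x : ℝ, x ^ (2 * m) * exp (-b * x ^ 2) = Gamma (m + 1 / 2) / b ^ ((m : ℝ) + 1 / 2) := by
  let f : ℝ → ℝ := fun y => y ^ (2 * m) * exp (-b * y ^ 2)
  have h_even : ∫ x, f x = ∫ x, f |x| := by simp only [f, pow_mul, sq_abs]
  rw [h_even, integral_comp_abs]
  have h_Ioi : ∫ x in Set.Ioi (0 : ℝ), x ^ (2 * m) * exp (-b * x ^ 2)
      = ∫ x in Set.Ioi (0 : ℝ), x ^ ((2 * m : ℕ) : ℝ) * exp (-b * x ^ (2 : ℝ)) := by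
    simp_rw [rpow_natCast, rpow_two]
  rw [h_Ioi, integral_rpow_mul_exp_neg_mul_rpow two_pos
    (neg_one_lt_zero.trans_le (Nat.cast_nonneg _)) hb]
  have h_exponent : -(((2 * m : ℕ) : ℝ) + 1) / 2 = -((m : ℝ) + 1 / 2) := by push_cast; ring
  rw [h_exponent, rpow_neg hb.le, show (((2 * m : ℕ) : ℝ) + 1) / 2 = m + 1 / 2 by push_cast; ring]
  field_simp

theorem integral_pow_two_mul_mul_exp_neg_sq_div_two (m : ℕ) :
    ∫ x : ℝ, x ^ (2 * m) * exp (-x ^ 2 / 2) = √(2 * π) * (2 * m - 1)‼ := by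
  have h := integral_pow_two_mul_mul_exp_neg_mul_sq one_half_pos m
  simp_rw [neg_mul, one_div_mul_eq_div] at h
  simp_rw [neg_div]
  rw [h, Gamma_nat_add_half, rpow_add one_half_pos, rpow_natCast, ← sqrt_eq_rpow,
    sqrt_mul zero_le_two, one_div, inv_pow, sqrt_inv]
  field_simp

theorem integrable_pow_mul_exp_neg_sq_div_two (n : ℕ) :
    Integrable fun x : ℝ => x ^ n * exp (-x ^ 2 / 2) := by
  have h := integrable_rpow_mul_exp_neg_mul_sq one_half_pos
    (neg_one_lt_zero.trans_le (Nat.cast_nonneg n))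
  simp_rw [rpow_natCast, neg_mul, one_div_mul_eq_div, ← neg_div] at h
  exact h

theorem integral_pow_two_mul_mul_one_add_mul_sq_pow_mul_gaussian (k r : ℕ) (a : ℝ) :
    ∫ z : ℝ, z ^ (2 * k) * ((1 + a * z ^ 2) ^ r * ((√(2 * π))⁻¹ * exp (-z ^ 2 / 2)))
      = ∑ j ∈ range (r + 1), (r.choose j : ℝ) * a ^ j * (2 * (j + k) - 1)‼ := by
  have h_expand : ∀ z : ℝ,
      z ^ (2 * k) * ((1 + a * z ^ 2) ^ r * ((√(2 * π))⁻¹ * exp (-z ^ 2 / 2)))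
        = ∑ j ∈ range (r + 1), (r.choose j * a ^ j * (√(2 * π))⁻¹) *
            (z ^ (2 * (j + k)) * exp (-z ^ 2 / 2)) := by
    intro z
    rw [add_comm, add_pow, sum_mul, mul_sum]
    refine sum_congr rfl fun j _ => ?_
    rw [mul_pow, ← pow_mul, one_pow, mul_add, pow_add]
    ring
  simp_rw [h_expand]
  rw [integral_finsetSum _ fun j _ =>
    (integrable_pow_mul_exp_neg_sq_div_two (2 * (j + k))).const_mul _]
  refine sum_congr rfl fun j _ => ?_
  rw [integral_const_mul, integral_pow_two_mul_mul_exp_neg_sq_div_two]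
  have : √(2 * π) ≠ 0 := by positivity
  field_simp

theorem sts_second_moment_general
    (r : ℕ) (lam : ℝ) :
    (∫ z : ℝ, z ^ 2 * ((1 + lam / (2 * r) * z ^ 2) ^ r *
        ((Real.sqrt (2 * Real.pi))⁻¹ * Real.exp (-z ^ 2 / 2)))
      = ∑ j ∈ range (r + 1), (r.choose j : ℝ) * (lam / (2 * r)) ^ j *
          ((2 * (j + 1)).factorial / (2 ^ (j + 1) * (j + 1).factorial))) ∧
    ((∑ j ∈ range (r + 1), (r.choose j : ℝ) * (lam / (2 * r)) ^ j *
          ((2 * j).factorial / (2 ^ j * j.factorial))) ≠ 0 →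
      ∫ z : ℝ, z ^ 2 *
          ((∑ j ∈ range (r + 1), (r.choose j : ℝ) * (lam / (2 * r)) ^ j *
              ((2 * j).factorial / (2 ^ j * j.factorial)))⁻¹ *
            ((1 + lam / (2 * r) * z ^ 2) ^ r *
              ((Real.sqrt (2 * Real.pi))⁻¹ * Real.exp (-z ^ 2 / 2))))
        = (∑ j ∈ range (r + 1), (r.choose j : ℝ) * (lam / (2 * r)) ^ j *
              ((2 * (j + 1)).factorial / (2 ^ (j + 1) * (j + 1).factorial))) /
          (∑ j ∈ range (r + 1), (r.choose j : ℝ) * (lam / (2 * r)) ^ j *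
              ((2 * j).factorial / (2 ^ j * j.factorial)))) := by
  have second_moment :=
    integral_pow_two_mul_mul_one_add_mul_sq_pow_mul_gaussian 1 r (lam / (2 * r))
  simp_rw [mul_one, Nat.cast_doubleFactorial_two_mul_sub_one] at second_moment
  refine ⟨second_moment, fun _ => ?_⟩
  rw [← second_moment, ← integral_div]
  congr 1 with z
  ring

/-- Second moment of the short-tailed symmetric density:
`∫ z²(1 + (λ/(2r))z²)^r φ(z) dz = Σ_{j=0}^{r} C(r,j) (λ/(2r))^j (2(j+1))!/(2^{j+1}(j+1)!)`;
consequently the variance `μ₂` of the standardized STS distribution (with normalizing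
constant `C` the reciprocal of the sum `S₁` of Statement 4) equals the ratio of this sum
to `S₁`. -/
theorem sts_second_moment
    (r : ℕ) (hr : 0 < r) (lam : ℝ) :
    (∫ z : ℝ, z ^ 2 * ((1 + lam / (2 * r) * z ^ 2) ^ r *
        ((Real.sqrt (2 * Real.pi))⁻¹ * Real.exp (-z ^ 2 / 2)))
      = ∑ j ∈ range (r + 1), (r.choose j : ℝ) * (lam / (2 * r)) ^ j *
          ((2 * (j + 1)).factorial / (2 ^ (j + 1) * (j + 1).factorial))) ∧
    ((∑ j ∈ range (r + 1), (r.choose j : ℝ) * (lam / (2 * r)) ^ j *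
          ((2 * j).factorial / (2 ^ j * j.factorial))) ≠ 0 →
      ∫ z : ℝ, z ^ 2 *
          ((∑ j ∈ range (r + 1), (r.choose j : ℝ) * (lam / (2 * r)) ^ j *
              ((2 * j).factorial / (2 ^ j * j.factorial)))⁻¹ *
            ((1 + lam / (2 * r) * z ^ 2) ^ r *
              ((Real.sqrt (2 * Real.pi))⁻¹ * Real.exp (-z ^ 2 / 2))))
        = (∑ j ∈ range (r + 1), (r.choose j : ℝ) * (lam / (2 * r)) ^ j *
              ((2 * (j + 1)).factorial / (2 ^ (j + 1) * (j + 1).factorial))) /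
          (∑ j ∈ range (r + 1), (r.choose j : ℝ) * (lam / (2 * r)) ^ j *
              ((2 * j).factorial / (2 ^ j * j.factorial)))) :=
  sts_second_moment_general r lam
end

section
/- Let r be a positive integer and let 0 < λ < 1. Then the function g(z) = (1 + (λ/(2r))·z²)^r · exp(−z²/2) is strictly decreasing on [0, ∞) and strictly increasing on (−∞, 0]; in particular g(z) < g(0) for every z ≠ 0, so the short-tailed symmetric density is unimodal with unique mode at z = 0. -/
/-!
Put `c = λ/(2r)`, so that `r c ≤ λ/2 < 1/2`, and substitute `t = z²`. For `0 ≤ s < t`,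
`1 + c t ≤ (1 + c s) (1 + c (t - s)) ≤ (1 + c s) e^{c (t - s)}`, so passing from `s` to `t`
multiplies `(1 + c t)^r` by at most `e^{r c (t - s)}`, while `e^{-t/2}` is multiplied by
`e^{-(t - s)/2}`, which is strictly smaller. Hence `t ↦ (1 + c t)^r e^{-t/2}` is strictly
decreasing on `[0, ∞)`, and composing with `z ↦ z²` gives the claim.
-/

open Set Real

lemma one_add_mul_le_mul_exp {c s t : ℝ} (hc : 0 ≤ c) (hs : 0 ≤ s) (hst : s ≤ t) :
    1 + c * t ≤ (1 + c * s) * exp (c * (t - s)) :=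
  calc 1 + c * t ≤ (1 + c * s) * (c * (t - s) + 1) := by
        nlinarith [mul_nonneg (mul_nonneg hc hs) (mul_nonneg hc (sub_nonneg.2 hst))]
    _ ≤ (1 + c * s) * exp (c * (t - s)) := by
        gcongr
        exact add_one_le_exp _

lemma strictAntiOn_one_add_mul_pow_mul_exp {c a : ℝ} {n : ℕ} (hc : 0 ≤ c) (hca : n * c < a) :
    StrictAntiOn (fun t => (1 + c * t) ^ n * exp (-(a * t))) (Ici 0) := by
  intro s (hs : 0 ≤ s) t (ht : 0 ≤ t) hst
  have hpow : (1 + c * t) ^ n ≤ (1 + c * s) ^ n * exp (n * c * (t - s)) :=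
    calc (1 + c * t) ^ n ≤ ((1 + c * s) * exp (c * (t - s))) ^ n :=
          pow_le_pow_left₀ (by positivity) (one_add_mul_le_mul_exp hc hs hst.le) n
      _ = (1 + c * s) ^ n * exp (n * c * (t - s)) := by
          rw [mul_pow, ← exp_nat_mul, mul_assoc]
  calc (1 + c * t) ^ n * exp (-(a * t))
      ≤ (1 + c * s) ^ n * exp (n * c * (t - s)) * exp (-(a * t)) := by gcongr
    _ = (1 + c * s) ^ n * exp (n * c * (t - s) - a * t) := by
        rw [mul_assoc, ← exp_add, ← sub_eq_add_neg]
    _ < (1 + c * s) ^ n * exp (-(a * s)) := by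
        gcongr
        nlinarith [mul_pos (sub_pos.2 hca) (sub_pos.2 hst)]

lemma StrictAntiOn.comp_sq {f : ℝ → ℝ} (hf : StrictAntiOn f (Ici 0)) :
    StrictAntiOn (fun z => f (z ^ 2)) (Ici 0) ∧ StrictMonoOn (fun z => f (z ^ 2)) (Iic 0) ∧
      ∀ z : ℝ, z ≠ 0 → f (z ^ 2) < f ((0 : ℝ) ^ 2) := by
  have hanti : StrictAntiOn (fun z => f (z ^ 2)) (Ici 0) :=
    hf.comp_strictMonoOn (pow_left_strictMonoOn₀ two_ne_zero) fun z _ => sq_nonneg z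
  have hmono : StrictMonoOn (fun z => f (z ^ 2)) (Iic 0) :=
    fun a (ha : a ≤ 0) b (hb : b ≤ 0) hab => hf (sq_nonneg b) (sq_nonneg a) (by nlinarith)
  refine ⟨hanti, hmono, fun z hz => ?_⟩
  rcases hz.lt_or_gt with hneg | hpos
  · exact hmono hneg.le (mem_Iic.2 le_rfl) hneg
  · exact hanti (mem_Ici.2 le_rfl) hpos.le hpos

lemma natCast_mul_div_two_mul_le (r : ℕ) {lam : ℝ} (hlam : 0 ≤ lam) :
    r * (lam / (2 * r)) ≤ lam / 2 := by
  rcases r.eq_zero_or_pos with rfl | hr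
  · simp; positivity
  · field_simp; rfl

theorem sts_unimodal_general
    (r : ℕ) (lam : ℝ) (hlam0 : 0 < lam) (hlam1 : lam < 1) :
    StrictAntiOn (fun z : ℝ => (1 + lam / (2 * r) * z ^ 2) ^ r * Real.exp (-z ^ 2 / 2))
        (Ici 0) ∧
    StrictMonoOn (fun z : ℝ => (1 + lam / (2 * r) * z ^ 2) ^ r * Real.exp (-z ^ 2 / 2))
        (Iic 0) ∧
    ∀ z : ℝ, z ≠ 0 →
      (1 + lam / (2 * r) * z ^ 2) ^ r * Real.exp (-z ^ 2 / 2)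
        < (1 + lam / (2 * r) * (0 : ℝ) ^ 2) ^ r * Real.exp (-(0 : ℝ) ^ 2 / 2) := by
  have hf : StrictAntiOn (fun t : ℝ => (1 + lam / (2 * r) * t) ^ r * exp (-t / 2)) (Ici 0) := by
    have := strictAntiOn_one_add_mul_pow_mul_exp (c := lam / (2 * r)) (n := r) (a := 1 / 2)
      (by positivity) (by linarith [natCast_mul_div_two_mul_le r hlam0.le])
    simpa only [neg_div, one_div, inv_mul_eq_div] using this
  exact hf.comp_sq

/-- For a positive integer `r` and `0 < λ < 1`, the function
`g(z) = (1 + (λ/(2r))z²)^r · exp(−z²/2)` is strictly decreasing on `[0, ∞)` and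
strictly increasing on `(−∞, 0]`; in particular `g(z) < g(0)` for every `z ≠ 0`,
so the short-tailed symmetric density is unimodal with unique mode at `z = 0`. -/
theorem sts_unimodal
    (r : ℕ) (hr : 0 < r) (lam : ℝ) (hlam0 : 0 < lam) (hlam1 : lam < 1) :
    StrictAntiOn (fun z : ℝ => (1 + lam / (2 * r) * z ^ 2) ^ r * Real.exp (-z ^ 2 / 2))
        (Ici 0) ∧
    StrictMonoOn (fun z : ℝ => (1 + lam / (2 * r) * z ^ 2) ^ r * Real.exp (-z ^ 2 / 2))
        (Iic 0) ∧
    ∀ z : ℝ, z ≠ 0 →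
      (1 + lam / (2 * r) * z ^ 2) ^ r * Real.exp (-z ^ 2 / 2)
        < (1 + lam / (2 * r) * (0 : ℝ) ^ 2) ^ r * Real.exp (-(0 : ℝ) ^ 2 / 2) :=
  sts_unimodal_general r lam hlam0 hlam1
end

section
/- Let r > 0 and 0 < λ ≤ 1. Then for every real t, the coefficient β₁(t) = 1 − λ·(1 − (λ/(2r))·t²)/(1 + (λ/(2r))·t²)² is nonnegative, and it is strictly positive whenever λ < 1. -/
/-- For `r > 0` and `0 < λ ≤ 1`, the MML coefficient
`β₁(t) = 1 − λ(1 − (λ/(2r))t²)/(1 + (λ/(2r))t²)²` is nonnegative for every `t`,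
and strictly positive whenever `λ < 1`. -/
theorem sts_beta1_nonneg
    (r : ℝ) (hr : 0 < r) (lam : ℝ) (hlam0 : 0 < lam) (hlam1 : lam ≤ 1) (t : ℝ) :
    0 ≤ 1 - lam * (1 - lam / (2 * r) * t ^ 2) / (1 + lam / (2 * r) * t ^ 2) ^ 2 ∧
    (lam < 1 →
      0 < 1 - lam * (1 - lam / (2 * r) * t ^ 2) / (1 + lam / (2 * r) * t ^ 2) ^ 2) := by
  have hu : 0 ≤ lam / (2 * r) * t ^ 2 := by positivity
  set u := lam / (2 * r) * t ^ 2 with hu_def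
  have hd : 0 < (1 + u) ^ 2 := by positivity
  constructor
  · rw [sub_nonneg, div_le_one hd]
    nlinarith
  · intro hlt
    rw [sub_pos, div_lt_one hd]
    nlinarith
end
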